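/- Let K and K' be non-degenerate CMIs, K'' = R_K^{K'}, can(pur(K)) = (C, ⟨𝕀_K, 𝕀_K, P_1,…,P_t⟩) and can(pur(K'')) = (C'', ⟨𝕀_{K''}, 𝕀_{K''}, P''_1,…,P''_r⟩) (general notation), with P = ∪_{i=1}^t P_i and P'' = ∪_{j=1}^r P''_j. If K implies K' and R_K^{K'} ≠ (·,⟨⟩), then P'' ⊆ P. -/
import Mathlib


open scoped Classical

namespace Paper

variable {n : ℕ}

/-- The marginal distribution of the coordinates in `α` of a joint distribution `p` of
the discrete random variables `X_1, …, X_n` (each taking countably many values, coded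
as natural numbers). -/
noncomputable def marginal (p : PMF (Fin n → ℕ)) (α : Finset (Fin n)) :
    PMF ({ i // i ∈ α } → ℕ) :=
  p.map fun x i => x i.1

/-- The Shannon (joint) entropy `H(X_α)`. -/
noncomputable def Hm (p : PMF (Fin n → ℕ)) (α : Finset (Fin n)) : ℝ :=
  ∑' y, Real.negMulLog ((marginal p α) y).toReal

/-- The conditional entropy `H(X_β | X_α) = H(X_{β ∪ α}) - H(X_α)`. -/
noncomputable def Hc (p : PMF (Fin n → ℕ)) (β α : Finset (Fin n)) : ℝ :=
  Hm p (β ∪ α) - Hm p α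

/-- Every individual random variable `X_i` has finite Shannon entropy
(the series defining `H(X_i)` is summable). -/
def FiniteEntropy (p : PMF (Fin n → ℕ)) : Prop :=
  ∀ i : Fin n, Summable fun y : ℕ => Real.negMulLog ((p.map fun x => x i) y).toReal

/-- `J(X_{Q_1}, …, X_{Q_k} | X_C) = (∑ i, H(X_{Q_i}|X_C)) - H(X_{Q_1},…,X_{Q_k}|X_C)`;
the joint conditional entropy of the tuple `(X_{Q_1},…,X_{Q_k})` equals
`H(X_{∪ i, Q_i} | X_C)` since the two tuples determine each other. -/
noncomputable def J (p : PMF (Fin n → ℕ)) (C : Finset (Fin n))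
    (Qs : Multiset (Finset (Fin n))) : ℝ :=
  (Qs.map fun Q => Hc p Q C).sum - Hc p Qs.sup C

/-- A conditional mutual independency (CMI) on `{1, …, n}`: a conditioning set `C`
together with a finite multiset `⟨Q_1, …, Q_k⟩` of subsets of `{1, …, n}`. -/
structure CMI (n : ℕ) where
  C : Finset (Fin n)
  Qs : Multiset (Finset (Fin n))

/-- `K` is valid for the joint distribution `p`. -/
def Valid (p : PMF (Fin n → ℕ)) (K : CMI n) : Prop :=
  J p K.C K.Qs = 0

/-- `K` is degenerate: valid for every finite-entropy joint distribution. -/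
def Degenerate (K : CMI n) : Prop :=
  ∀ p : PMF (Fin n → ℕ), FiniteEntropy p → Valid p K

/-- `K ∼ K'`: valid for exactly the same finite-entropy joint distributions. -/
def Equivalent (K K' : CMI n) : Prop :=
  ∀ p : PMF (Fin n → ℕ), FiniteEntropy p → (Valid p K ↔ Valid p K')

/-- `K` implies `K'`. -/
def Implies (K K' : CMI n) : Prop :=
  ∀ p : PMF (Fin n → ℕ), FiniteEntropy p → Valid p K → Valid p K'

/-- `K` is in pure form: every `Q_i` is nonempty and disjoint from `C`. -/
def IsPure (K : CMI n) : Prop :=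
  ∀ Q ∈ K.Qs, Q ≠ ∅ ∧ Q ∩ K.C = ∅

/-- The pure form `pur(K) = (C, ⟨Q_i \ C : Q_i \ C ≠ ∅⟩)`. -/
noncomputable def pur (K : CMI n) : CMI n :=
  ⟨K.C, (K.Qs.map fun Q => Q \ K.C).filter fun Q => Q ≠ ∅⟩

/-- The set `𝕀_K` of repeated indices of `K`: indices lying in `Q_i ∩ Q_j` for two
distinct entries `i ≠ j` of the multiset (automatically `∅` when `k ≤ 1`). -/
noncomputable def repSet (K : CMI n) : Finset (Fin n) :=
  Finset.univ.filter fun q => 2 ≤ Multiset.card (K.Qs.filter fun Q => q ∈ Q)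

/-- The multiset `⟨P_1, …, P_t⟩` of nonempty sets among the `Q_i \ 𝕀_K`. -/
noncomputable def parts (K : CMI n) : Multiset (Finset (Fin n)) :=
  (K.Qs.map fun Q => Q \ repSet K).filter fun P => P ≠ ∅

/-- The multiset of the `P_j`-entries of the canonical form `can(K)`
(general notation). -/
noncomputable def canParts (K : CMI n) : Multiset (Finset (Fin n)) :=
  if Multiset.card K.Qs ≤ 1 then 0
  else if repSet K ≠ ∅ ∧ Multiset.card (parts K) ≤ 1 then 0
  else parts K

/-- The canonical form `can(K)` (of a pure-form CMI); all degenerate canonical forms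
`(·,⟨⟩)` are represented by `⟨∅, 0⟩`. -/
noncomputable def can (K : CMI n) : CMI n :=
  if Multiset.card K.Qs ≤ 1 then ⟨∅, 0⟩
  else if repSet K = ∅ then ⟨K.C, parts K⟩
  else if Multiset.card (parts K) ≤ 1 then ⟨K.C, {repSet K, repSet K}⟩
  else ⟨K.C, repSet K ::ₘ repSet K ::ₘ parts K⟩

/-- `R_K^{K'}`: the CMI "`K'` conditioning on `K`"; the degenerate case `(·,⟨⟩)` is
represented by `⟨∅, 0⟩`. -/
noncomputable def RCond (K K' : CMI n) : CMI n :=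
  let I := repSet (pur K)
  let I' := repSet (pur K')
  let Ts := ((canParts (pur K')).map fun P => P \ I).filter fun T => T ≠ ∅
  if I' \ I = ∅ ∧ Multiset.card Ts ≤ 1 then ⟨∅, 0⟩
  else if I' \ I = ∅ then ⟨K'.C \ I, Ts⟩
  else if Multiset.card Ts ≤ 1 then ⟨K'.C \ I, {I' \ I, I' \ I}⟩
  else ⟨K'.C \ I, (I' \ I) ::ₘ (I' \ I) ::ₘ Ts⟩



section Helpers

open Multiset

theorem mem_msup {s : Multiset (Finset (Fin n))} {x : Fin n} :
    x ∈ s.sup ↔ ∃ t ∈ s, x ∈ t := by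
  induction s using Multiset.induction_on with
  | empty => simp
  | cons a s ih => simp [Multiset.sup_cons, ih]

theorem two_le_card {γ : Type*} {M : Multiset γ} {a b : γ} (ha : a ∈ M) (hb : b ∈ M)
    (hab : a ≠ b) : 2 ≤ Multiset.card M := by
  obtain ⟨M', rfl⟩ := Multiset.exists_cons_of_mem ha
  have hb' : b ∈ M' := by
    rcases Multiset.mem_cons.1 hb with h | h
    · exact absurd h.symm hab
    · exact h
  obtain ⟨M'', rfl⟩ := Multiset.exists_cons_of_mem hb'
  simp only [Multiset.card_cons]
  omega

theorem pair_le_of_two_le {γ : Type*} {p : γ → Prop} [DecidablePred p] {M : Multiset γ}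
    (h : 2 ≤ Multiset.card (M.filter p)) :
    ∃ X Y, p X ∧ p Y ∧ X ::ₘ Y ::ₘ 0 ≤ M := by
  obtain ⟨X, hX⟩ := Multiset.card_pos_iff_exists_mem.1
    (show 0 < Multiset.card (M.filter p) by omega)
  obtain ⟨F, hF⟩ := Multiset.exists_cons_of_mem hX
  have h2 : 0 < Multiset.card F := by rw [hF, Multiset.card_cons] at h; omega
  obtain ⟨Y, hY⟩ := Multiset.card_pos_iff_exists_mem.1 h2
  obtain ⟨F', rfl⟩ := Multiset.exists_cons_of_mem hY
  refine ⟨X, Y, (Multiset.mem_filter.1 hX).2,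
    (Multiset.mem_filter.1 (hF ▸ Multiset.mem_cons_of_mem hY : Y ∈ M.filter p)).2, ?_⟩
  refine le_trans ?_ (Multiset.filter_le p M)
  rw [hF]
  exact Multiset.cons_le_cons _ (Multiset.cons_le_cons _ (Multiset.zero_le _))

end Helpers

section Entropy

noncomputable def bitmap (S : Finset (Fin n)) : Bool → (Fin n → ℕ) :=
  fun b i => if b = true ∧ i ∈ S then 1 else 0

noncomputable def pS (S : Finset (Fin n)) : PMF (Fin n → ℕ) :=
  (PMF.uniformOfFintype Bool).map (bitmap S)

theorem map_bool_apply {β : Type*} (g : Bool → β) (y : β) :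
    ((PMF.uniformOfFintype Bool).map g) y
      = (if y = g false then 2⁻¹ else 0) + (if y = g true then 2⁻¹ else 0) := by
  rw [PMF.map_apply, tsum_bool]
  simp [PMF.uniformOfFintype_apply]

theorem summable_negMulLog_map_bool {β : Type*} (g : Bool → β) :
    Summable fun y => Real.negMulLog (((PMF.uniformOfFintype Bool).map g) y).toReal := by
  apply summable_of_ne_finset_zero (s := ({g false, g true} : Finset β))
  intro y hy
  simp only [Finset.mem_insert, Finset.mem_singleton, not_or] at hy
  rw [map_bool_apply, if_neg hy.1, if_neg hy.2]
  simp

theorem tsum_negMulLog_map_bool {β : Type*} (g : Bool → β) :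
    ∑' y, Real.negMulLog (((PMF.uniformOfFintype Bool).map g) y).toReal
      = if g false = g true then 0 else Real.log 2 := by
  by_cases h : g false = g true
  · rw [if_pos h]
    have hz : ∀ y, Real.negMulLog (((PMF.uniformOfFintype Bool).map g) y).toReal = 0 := by
      intro y
      rw [map_bool_apply, ← h]
      by_cases hy : y = g false
      · rw [if_pos hy, ENNReal.inv_two_add_inv_two]
        simp
      · rw [if_neg hy]
        simp
    simp only [hz]
    exact tsum_zero
  · rw [if_neg h]
    have hne : g true ≠ g false := fun hh => h hh.symm
    have hvanish : ∀ y ∉ ({g false, g true} : Finset β),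
        Real.negMulLog (((PMF.uniformOfFintype Bool).map g) y).toReal = 0 := by
      intro y hy
      simp only [Finset.mem_insert, Finset.mem_singleton, not_or] at hy
      rw [map_bool_apply, if_neg hy.1, if_neg hy.2]
      simp
    rw [tsum_eq_sum hvanish, Finset.sum_pair h]
    rw [map_bool_apply, map_bool_apply, if_pos rfl, if_neg h, if_neg hne, if_pos rfl,
      add_zero, zero_add]
    have h2 : ((2 : ENNReal)⁻¹).toReal = (2 : ℝ)⁻¹ := by
      simp
    rw [h2]
    have hn : Real.negMulLog (2⁻¹ : ℝ) = 2⁻¹ * Real.log 2 := by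
      rw [Real.negMulLog, Real.log_inv]
      ring
    rw [hn]
    ring

theorem Hm_pS (S α : Finset (Fin n)) :
    Hm (pS S) α = if α ∩ S = ∅ then 0 else Real.log 2 := by
  have hmarg : marginal (pS S) α
      = (PMF.uniformOfFintype Bool).map ((fun x (i : {i // i ∈ α}) => x i.1) ∘ bitmap S) := by
    rw [marginal, pS, PMF.map_comp]
  have hcond : (((fun x (i : {i // i ∈ α}) => x i.1) ∘ bitmap S) false
      = ((fun x (i : {i // i ∈ α}) => x i.1) ∘ bitmap S) true) ↔ α ∩ S = ∅ := by
    constructor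
    · intro hfe
      by_contra hne
      obtain ⟨i, hi⟩ := Finset.nonempty_iff_ne_empty.2 hne
      have h1 := congrFun hfe ⟨i, (Finset.mem_inter.1 hi).1⟩
      simp [bitmap, (Finset.mem_inter.1 hi).2] at h1
    · intro he
      funext i
      have hiS : i.1 ∉ S := fun hiS =>
        (Finset.notMem_empty i.1) (he ▸ Finset.mem_inter.2 ⟨i.2, hiS⟩)
      simp [bitmap, hiS]
  rw [Hm, hmarg, tsum_negMulLog_map_bool]
  simp only [hcond]

theorem finiteEntropy_pS (S : Finset (Fin n)) : FiniteEntropy (pS S) := by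
  intro i
  have h : (pS S).map (fun x => x i)
      = (PMF.uniformOfFintype Bool).map ((fun x : Fin n → ℕ => x i) ∘ bitmap S) := by
    rw [pS, PMF.map_comp]
  rw [h]
  exact summable_negMulLog_map_bool _

theorem Hc_pS (S : Finset (Fin n)) {C : Finset (Fin n)} (hC : C ∩ S = ∅) (Q : Finset (Fin n)) :
    Hc (pS S) Q C = if Q ∩ S = ∅ then 0 else Real.log 2 := by
  have hu : (Q ∪ C) ∩ S = Q ∩ S := by
    rw [Finset.union_inter_distrib_right, hC, Finset.union_empty]
  rw [Hc, Hm_pS, Hm_pS, if_pos hC, sub_zero, hu]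

theorem sum_map_Hc (S C : Finset (Fin n)) (hC : C ∩ S = ∅) (Qs : Multiset (Finset (Fin n))) :
    (Qs.map fun Q => Hc (pS S) Q C).sum
      = (Multiset.card (Qs.filter fun Q => ¬ Q ∩ S = ∅) : ℝ) * Real.log 2 := by
  induction Qs using Multiset.induction_on with
  | empty => simp
  | cons Q Qs ih =>
    rw [Multiset.map_cons, Multiset.sum_cons, ih, Hc_pS S hC, Multiset.filter_cons]
    by_cases h : Q ∩ S = ∅
    · simp [h]
    · rw [if_neg h, if_pos h, Multiset.card_add, Multiset.card_singleton]
      push_cast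
      ring

theorem sup_inter_eq_empty {S : Finset (Fin n)} {Qs : Multiset (Finset (Fin n))} :
    Qs.sup ∩ S = ∅ ↔ ∀ Q ∈ Qs, Q ∩ S = ∅ := by
  constructor
  · intro h Q hQ
    rw [Finset.eq_empty_iff_forall_notMem]
    intro x hx
    rw [Finset.eq_empty_iff_forall_notMem] at h
    exact h x (Finset.mem_inter.2 ⟨mem_msup.2 ⟨Q, hQ, (Finset.mem_inter.1 hx).1⟩,
      (Finset.mem_inter.1 hx).2⟩)
  · intro h
    rw [Finset.eq_empty_iff_forall_notMem]
    intro x hx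
    obtain ⟨hx1, hx2⟩ := Finset.mem_inter.1 hx
    obtain ⟨Q, hQ, hxQ⟩ := mem_msup.1 hx1
    exact Finset.notMem_empty x (h Q hQ ▸ Finset.mem_inter.2 ⟨hxQ, hx2⟩)

theorem J_pS_eq_zero_iff (S C : Finset (Fin n)) (hC : C ∩ S = ∅)
    (Qs : Multiset (Finset (Fin n))) :
    J (pS S) C Qs = 0 ↔ Multiset.card (Qs.filter fun Q => ¬ Q ∩ S = ∅) ≤ 1 := by
  have hL : Real.log 2 ≠ 0 := ne_of_gt (Real.log_pos one_lt_two)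
  rw [J, sum_map_Hc S C hC, Hc_pS S hC]
  by_cases hsup : Qs.sup ∩ S = ∅
  · have h0 : (Qs.filter fun Q => ¬ Q ∩ S = ∅) = 0 :=
      Multiset.filter_eq_nil.2 fun Q hQ => not_not_intro (sup_inter_eq_empty.1 hsup Q hQ)
    rw [if_pos hsup, h0]
    simp
  · rw [if_neg hsup]
    have h1 : 1 ≤ Multiset.card (Qs.filter fun Q => ¬ Q ∩ S = ∅) := by
      rcases Nat.eq_zero_or_pos (Multiset.card (Qs.filter fun Q => ¬ Q ∩ S = ∅)) with h | h
      · exfalso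
        apply hsup
        apply sup_inter_eq_empty.2
        intro Q hQ
        by_contra hne
        have hmem : Q ∈ Qs.filter (fun Q => ¬ Q ∩ S = ∅) := Multiset.mem_filter.2 ⟨hQ, hne⟩
        rw [Multiset.card_eq_zero.1 h] at hmem
        exact Multiset.notMem_zero _ hmem
      · omega
    set m := Multiset.card (Qs.filter fun Q => ¬ Q ∩ S = ∅) with hm
    constructor
    · intro hJ
      have h2 : ((m : ℝ) - 1) * Real.log 2 = 0 := by linear_combination hJ
      rcases mul_eq_zero.1 h2 with h3 | h3
      · have : (m : ℝ) = 1 := by linarith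
        have : m = 1 := by exact_mod_cast this
        omega
      · exact absurd h3 hL
    · intro hle
      have : m = 1 := le_antisymm hle h1
      rw [this]
      simp

theorem J_pS_eq_zero_of_C (S C : Finset (Fin n)) (hC : ¬ C ∩ S = ∅)
    (Qs : Multiset (Finset (Fin n))) : J (pS S) C Qs = 0 := by
  have key : ∀ Q : Finset (Fin n), Hc (pS S) Q C = 0 := by
    intro Q
    have hsub : C ∩ S ⊆ (Q ∪ C) ∩ S :=
      Finset.inter_subset_inter Finset.subset_union_right (le_refl S)
    have hne : ¬ (Q ∪ C) ∩ S = ∅ := fun h => hC (Finset.subset_empty.1 (h ▸ hsub))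
    rw [Hc, Hm_pS, Hm_pS, if_neg hC, if_neg hne, sub_self]
  have hsum : (Qs.map fun Q => Hc (pS S) Q C).sum = 0 := by
    apply Multiset.sum_eq_zero
    intro x hx
    obtain ⟨Q, _, rfl⟩ := Multiset.mem_map.1 hx
    exact key Q
  rw [J, hsum, key, sub_zero]

end Entropy

section Comb

theorem mem_repSet {K : CMI n} {x : Fin n} :
    x ∈ repSet K ↔ 2 ≤ Multiset.card (K.Qs.filter fun Q => x ∈ Q) := by
  simp [repSet]

theorem exists_mem_pur {K : CMI n} {E : Finset (Fin n)} (h : E ∈ (pur K).Qs) :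
    E ≠ ∅ ∧ ∃ Q ∈ K.Qs, Q \ K.C = E := by
  simp only [pur, Multiset.mem_filter, Multiset.mem_map] at h
  exact ⟨h.2, h.1⟩

theorem notMem_C_of_mem_pur {K : CMI n} {E : Finset (Fin n)} (hE : E ∈ (pur K).Qs)
    {x : Fin n} (hx : x ∈ E) : x ∉ K.C := by
  obtain ⟨-, Q, -, rfl⟩ := exists_mem_pur hE
  exact (Finset.mem_sdiff.1 hx).2

theorem repSet_pur_notMem_C {K : CMI n} {x : Fin n} (hx : x ∈ repSet (pur K)) : x ∉ K.C := by
  rw [mem_repSet] at hx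
  obtain ⟨E, hE⟩ := Multiset.card_pos_iff_exists_mem.1
    (show 0 < Multiset.card ((pur K).Qs.filter fun Q => x ∈ Q) by omega)
  exact notMem_C_of_mem_pur (Multiset.mem_filter.1 hE).1 (Multiset.mem_filter.1 hE).2

theorem canParts_le_parts (K : CMI n) : canParts K ≤ parts K := by
  unfold canParts
  split_ifs <;> first | exact Multiset.zero_le _ | exact le_rfl

theorem mem_parts {K : CMI n} {P : Finset (Fin n)} (h : P ∈ parts K) :
    P ≠ ∅ ∧ ∃ Q ∈ K.Qs, Q \ repSet K = P := by
  simp only [parts, Multiset.mem_filter, Multiset.mem_map] at h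
  exact ⟨h.2, h.1⟩

theorem eq_of_mem_two {K : CMI n} {x : Fin n} (hx : x ∉ repSet K) {A B : Finset (Fin n)}
    (hA : A ∈ K.Qs) (hB : B ∈ K.Qs) (hxA : x ∈ A) (hxB : x ∈ B) : A = B := by
  by_contra hne
  exact hx (mem_repSet.2 (two_le_card
    (Multiset.mem_filter.2 ⟨hA, hxA⟩ : A ∈ K.Qs.filter fun Q => x ∈ Q)
    (Multiset.mem_filter.2 ⟨hB, hxB⟩) hne))

theorem card_filter_pur (K : CMI n) (p : Finset (Fin n) → Prop) [DecidablePred p] :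
    Multiset.card (((pur K).Qs).filter p)
      = Multiset.card (K.Qs.filter fun Q => p (Q \ K.C) ∧ ¬ Q \ K.C = ∅) := by
  show Multiset.card ((((K.Qs.map fun Q => Q \ K.C)).filter (fun Q => Q ≠ ∅)).filter p) = _
  rw [Multiset.filter_filter, Multiset.filter_map, Multiset.card_map]
  exact congrArg Multiset.card (Multiset.filter_congr fun Q _ => Iff.rfl)

/-- Main argument on the `K` side. -/
theorem conclude (K : CMI n) (q r : Fin n) (hq : q ∉ repSet (pur K)) (hr : r ∉ repSet (pur K))
    (hcnt : 2 ≤ Multiset.card (((pur K).Qs).filter fun E => q ∈ E ∨ r ∈ E)) :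
    q ∈ (canParts (pur K)).sup := by
  obtain ⟨X, Y, hXp, hYp, hpair⟩ := pair_le_of_two_le hcnt
  have key : ∀ A B : Finset (Fin n), A ::ₘ B ::ₘ 0 ≤ (pur K).Qs → q ∈ A → r ∈ B →
      q ∈ (canParts (pur K)).sup := by
    intro A B hAB hqA hrB
    have hqAI : q ∈ A \ repSet (pur K) := Finset.mem_sdiff.2 ⟨hqA, hq⟩
    have hrBI : r ∈ B \ repSet (pur K) := Finset.mem_sdiff.2 ⟨hrB, hr⟩
    have hpar : (A \ repSet (pur K)) ::ₘ (B \ repSet (pur K)) ::ₘ 0 ≤ parts (pur K) := by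
      have h2 : (((A ::ₘ B ::ₘ 0).map fun Q => Q \ repSet (pur K)).filter fun P => P ≠ ∅)
          = (A \ repSet (pur K)) ::ₘ (B \ repSet (pur K)) ::ₘ 0 := by
        rw [Multiset.map_cons, Multiset.map_cons, Multiset.map_zero]
        rw [Multiset.filter_eq_self.2]
        intro P hP
        rcases Multiset.mem_cons.1 hP with h | h
        · subst h; exact Finset.ne_empty_of_mem hqAI
        · rcases Multiset.mem_cons.1 h with h' | h'
          · subst h'; exact Finset.ne_empty_of_mem hrBI
          · exact absurd h' (Multiset.notMem_zero _)
      calc (A \ repSet (pur K)) ::ₘ (B \ repSet (pur K)) ::ₘ 0 = _ := h2.symm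
        _ ≤ parts (pur K) := Multiset.filter_le_filter _ (Multiset.map_le_map hAB)
    have hc2 : 2 ≤ Multiset.card ((pur K).Qs) :=
      le_trans (by simp) (Multiset.card_le_card hAB)
    have hp2 : 2 ≤ Multiset.card (parts (pur K)) :=
      le_trans (by simp) (Multiset.card_le_card hpar)
    have hcan : canParts (pur K) = parts (pur K) := by
      unfold canParts
      rw [if_neg (by omega), if_neg (by rintro ⟨-, hle⟩; omega)]
    rw [hcan]
    exact mem_msup.2 ⟨A \ repSet (pur K),
      Multiset.mem_of_le hpar (Multiset.mem_cons_self _ _), hqAI⟩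
  have hnq : ¬ (q ∈ X ∧ q ∈ Y) := by
    rintro ⟨h1, h2⟩
    apply hq
    rw [mem_repSet]
    refine le_trans ?_ (Multiset.card_le_card
      (Multiset.filter_le_filter (fun Q => q ∈ Q) hpair))
    rw [Multiset.filter_eq_self.2]
    · simp
    · intro E hE
      rcases Multiset.mem_cons.1 hE with h | h
      · subst h; exact h1
      · rcases Multiset.mem_cons.1 h with h' | h'
        · subst h'; exact h2
        · exact absurd h' (Multiset.notMem_zero _)
  have hnr : ¬ (r ∈ X ∧ r ∈ Y) := by
    rintro ⟨h1, h2⟩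
    apply hr
    rw [mem_repSet]
    refine le_trans ?_ (Multiset.card_le_card
      (Multiset.filter_le_filter (fun Q => r ∈ Q) hpair))
    rw [Multiset.filter_eq_self.2]
    · simp
    · intro E hE
      rcases Multiset.mem_cons.1 hE with h | h
      · subst h; exact h1
      · rcases Multiset.mem_cons.1 h with h' | h'
        · subst h'; exact h2
        · exact absurd h' (Multiset.notMem_zero _)
  rcases hXp with hqX | hrX <;> rcases hYp with hqY | hrY
  · exact absurd ⟨hqX, hqY⟩ hnq
  · exact key X Y hpair hqX hrY
  · exact key Y X (by rwa [Multiset.cons_swap]) hqY hrX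
  · exact absurd ⟨hrX, hrY⟩ hnr

/-- Main argument: from the data extracted from `R_K^{K'}`, conclude. -/
theorem main_step (K K' : CMI n) (himp : Implies K K') (q : Fin n)
    (hq2 : 2 ≤ Multiset.card (((pur K').Qs).filter
        (fun E => ¬ (E \ repSet (pur K')) \ repSet (pur K) = ∅)))
    (E1 : Finset (Fin n)) (hE1 : E1 ∈ (pur K').Qs)
    (hqE1 : q ∈ (E1 \ repSet (pur K')) \ repSet (pur K)) :
    q ∈ (canParts (pur K)).sup := by
  have hqE : q ∈ E1 := (Finset.mem_sdiff.1 (Finset.mem_sdiff.1 hqE1).1).1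
  have hqI' : q ∉ repSet (pur K') := (Finset.mem_sdiff.1 (Finset.mem_sdiff.1 hqE1).1).2
  have hqI : q ∉ repSet (pur K) := (Finset.mem_sdiff.1 hqE1).2
  have hcq : Multiset.card (((pur K').Qs).filter fun E => q ∈ E) ≤ 1 := by
    by_contra h
    exact hqI' (mem_repSet.2 (by omega))
  -- find a second witness E2 avoiding q
  have hsplit : 1 ≤ Multiset.card (((pur K').Qs).filter
      fun E => (¬ (E \ repSet (pur K')) \ repSet (pur K) = ∅) ∧ q ∉ E) := by
    have hadd := Multiset.filter_add_filter
      (fun E : Finset (Fin n) => (¬ (E \ repSet (pur K')) \ repSet (pur K) = ∅) ∧ q ∈ E)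
      (fun E : Finset (Fin n) => (¬ (E \ repSet (pur K')) \ repSet (pur K) = ∅) ∧ q ∉ E)
      ((pur K').Qs)
    have hcards := congrArg Multiset.card hadd
    rw [Multiset.card_add, Multiset.card_add] at hcards
    have hor : (((pur K').Qs).filter fun E =>
        ((¬ (E \ repSet (pur K')) \ repSet (pur K) = ∅) ∧ q ∈ E) ∨
        ((¬ (E \ repSet (pur K')) \ repSet (pur K) = ∅) ∧ q ∉ E))
        = ((pur K').Qs).filter fun E => ¬ (E \ repSet (pur K')) \ repSet (pur K) = ∅ := by
      apply Multiset.filter_congr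
      intro E _
      constructor
      · rintro (⟨h, -⟩ | ⟨h, -⟩) <;> exact h
      · intro h
        by_cases hqE' : q ∈ E
        · exact Or.inl ⟨h, hqE'⟩
        · exact Or.inr ⟨h, hqE'⟩
    have hand : (((pur K').Qs).filter fun E =>
        ((¬ (E \ repSet (pur K')) \ repSet (pur K) = ∅) ∧ q ∈ E) ∧
        ((¬ (E \ repSet (pur K')) \ repSet (pur K) = ∅) ∧ q ∉ E)) = 0 := by
      apply Multiset.filter_eq_nil.2
      rintro E - ⟨⟨-, h1⟩, ⟨-, h2⟩⟩
      exact h2 h1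
    rw [hor, hand] at hcards
    have hle : Multiset.card (((pur K').Qs).filter
        fun E => (¬ (E \ repSet (pur K')) \ repSet (pur K) = ∅) ∧ q ∈ E)
        ≤ Multiset.card (((pur K').Qs).filter fun E => q ∈ E) :=
      Multiset.card_le_card (Multiset.monotone_filter_right _ (fun E h => h.2))
    simp only [Multiset.card_zero] at hcards
    omega
  obtain ⟨E2, hE2mem'⟩ := Multiset.card_pos_iff_exists_mem.1
    (show 0 < Multiset.card (((pur K').Qs).filter
      fun E => (¬ (E \ repSet (pur K')) \ repSet (pur K) = ∅) ∧ q ∉ E) by omega)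
  have hE2 : E2 ∈ (pur K').Qs := (Multiset.mem_filter.1 hE2mem').1
  have hE2ne : ¬ (E2 \ repSet (pur K')) \ repSet (pur K) = ∅ :=
    (Multiset.mem_filter.1 hE2mem').2.1
  have hqE2 : q ∉ E2 := (Multiset.mem_filter.1 hE2mem').2.2
  obtain ⟨r, hrmem⟩ := Finset.nonempty_iff_ne_empty.2 hE2ne
  have hrE2 : r ∈ E2 := (Finset.mem_sdiff.1 (Finset.mem_sdiff.1 hrmem).1).1
  have hrI' : r ∉ repSet (pur K') := (Finset.mem_sdiff.1 (Finset.mem_sdiff.1 hrmem).1).2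
  have hrI : r ∉ repSet (pur K) := (Finset.mem_sdiff.1 hrmem).2
  have hqr : q ≠ r := fun h => hqE2 (h ▸ hrE2)
  -- no pure entry of K' contains both q and r
  have hnoboth : ∀ E ∈ (pur K').Qs, ¬ (q ∈ E ∧ r ∈ E) := by
    rintro E hE ⟨h1, h2⟩
    have hEE1 : E = E1 := eq_of_mem_two hqI' hE hE1 h1 hqE
    have hE1ne2 : E1 ≠ E2 := fun h => hqE2 (h ▸ hqE)
    exact hE1ne2 (eq_of_mem_two hrI' hE1 hE2 (hEE1 ▸ h2) hrE2)
  -- q,r each hit some pure entry of K'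
  have hq1 : 1 ≤ Multiset.card (((pur K').Qs).filter fun E => q ∈ E) :=
    Multiset.card_pos_iff_exists_mem.2 ⟨E1, Multiset.mem_filter.2 ⟨hE1, hqE⟩⟩
  have hr1 : 1 ≤ Multiset.card (((pur K').Qs).filter fun E => r ∈ E) :=
    Multiset.card_pos_iff_exists_mem.2 ⟨E2, Multiset.mem_filter.2 ⟨hE2, hrE2⟩⟩
  have hhits : 2 ≤ Multiset.card (((pur K').Qs).filter fun E => q ∈ E ∨ r ∈ E) := by
    have hadd := Multiset.filter_add_filter
      (fun E : Finset (Fin n) => q ∈ E) (fun E : Finset (Fin n) => r ∈ E) ((pur K').Qs)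
    have hcards := congrArg Multiset.card hadd
    rw [Multiset.card_add, Multiset.card_add] at hcards
    have hand : (((pur K').Qs).filter fun E => q ∈ E ∧ r ∈ E) = 0 :=
      Multiset.filter_eq_nil.2 hnoboth
    rw [hand] at hcards
    simp only [Multiset.card_zero] at hcards
    omega
  -- the distribution
  set S : Finset (Fin n) := {q, r} with hSdef
  have hqS : q ∈ S := by simp [hSdef]
  have hrS : r ∈ S := by simp [hSdef]
  have hmemS : ∀ x, x ∈ S → x = q ∨ x = r := by
    intro x hx
    rw [hSdef, Finset.mem_insert, Finset.mem_singleton] at hx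
    exact hx
  have hqC' : q ∉ K'.C := notMem_C_of_mem_pur hE1 hqE
  have hrC' : r ∉ K'.C := notMem_C_of_mem_pur hE2 hrE2
  have hSC' : K'.C ∩ S = ∅ := by
    rw [Finset.eq_empty_iff_forall_notMem]
    intro x hx
    obtain ⟨hx1, hx2⟩ := Finset.mem_inter.1 hx
    rcases hmemS x hx2 with rfl | rfl
    · exact hqC' hx1
    · exact hrC' hx1
  have hhits' : 2 ≤ Multiset.card (K'.Qs.filter fun Q => ¬ Q ∩ S = ∅) := by
    calc 2 ≤ Multiset.card (((pur K').Qs).filter fun E => q ∈ E ∨ r ∈ E) := hhits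
      _ = Multiset.card (K'.Qs.filter
            fun Q => (q ∈ Q \ K'.C ∨ r ∈ Q \ K'.C) ∧ ¬ Q \ K'.C = ∅) :=
          card_filter_pur K' _
      _ ≤ Multiset.card (K'.Qs.filter fun Q => ¬ Q ∩ S = ∅) := by
          apply Multiset.card_le_card
          apply Multiset.monotone_filter_right
          rintro Q ⟨hor, -⟩
          rcases hor with h | h
          · exact Finset.ne_empty_of_mem
              (Finset.mem_inter.2 ⟨(Finset.mem_sdiff.1 h).1, hqS⟩)
          · exact Finset.ne_empty_of_mem
              (Finset.mem_inter.2 ⟨(Finset.mem_sdiff.1 h).1, hrS⟩)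
  have hnv' : ¬ Valid (pS S) K' := by
    intro hv
    have hv' : J (pS S) K'.C K'.Qs = 0 := hv
    have := (J_pS_eq_zero_iff S K'.C hSC' K'.Qs).1 hv'
    omega
  have hnv : ¬ Valid (pS S) K := fun hv => hnv' (himp (pS S) (finiteEntropy_pS S) hv)
  have hSC : K.C ∩ S = ∅ := by
    by_contra h
    exact hnv (J_pS_eq_zero_of_C S K.C h K.Qs)
  have hqC : q ∉ K.C := by
    intro h
    rw [Finset.eq_empty_iff_forall_notMem] at hSC
    exact hSC q (Finset.mem_inter.2 ⟨h, hqS⟩)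
  have hrC : r ∉ K.C := by
    intro h
    rw [Finset.eq_empty_iff_forall_notMem] at hSC
    exact hSC r (Finset.mem_inter.2 ⟨h, hrS⟩)
  have hhK : 2 ≤ Multiset.card (K.Qs.filter fun Q => ¬ Q ∩ S = ∅) := by
    by_contra h
    exact hnv ((J_pS_eq_zero_iff S K.C hSC K.Qs).2 (by omega))
  have hhpur : 2 ≤ Multiset.card (((pur K).Qs).filter fun E => q ∈ E ∨ r ∈ E) := by
    rw [card_filter_pur K]
    refine le_trans hhK (le_of_eq (congrArg Multiset.card (Multiset.filter_congr ?_)))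
    intro Q _
    constructor
    · intro hQS
      obtain ⟨x, hx⟩ := Finset.nonempty_iff_ne_empty.2 hQS
      obtain ⟨hxQ, hxS⟩ := Finset.mem_inter.1 hx
      rcases hmemS x hxS with rfl | rfl
      · exact ⟨Or.inl (Finset.mem_sdiff.2 ⟨hxQ, hqC⟩),
          Finset.ne_empty_of_mem (Finset.mem_sdiff.2 ⟨hxQ, hqC⟩)⟩
      · exact ⟨Or.inr (Finset.mem_sdiff.2 ⟨hxQ, hrC⟩),
          Finset.ne_empty_of_mem (Finset.mem_sdiff.2 ⟨hxQ, hrC⟩)⟩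
    · rintro ⟨hor, -⟩
      rcases hor with h | h
      · exact Finset.ne_empty_of_mem
          (Finset.mem_inter.2 ⟨(Finset.mem_sdiff.1 h).1, hqS⟩)
      · exact Finset.ne_empty_of_mem
          (Finset.mem_inter.2 ⟨(Finset.mem_sdiff.1 h).1, hrS⟩)
  exact conclude K q r hqI hrI hhpur

end Comb

section Branches

/-- `can(pur(K''))` when `K'' = (C₀, ⟨D,D⟩)`. -/
theorem canParts_of_double {C0 D : Finset (Fin n)} (hD : D ≠ ∅) (hDC : D \ C0 = D) :
    canParts (pur (⟨C0, {D, D}⟩ : CMI n)) = 0 := by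
  have hQs : (pur (⟨C0, {D, D}⟩ : CMI n)).Qs = {D, D} := by
    show ((({D, D} : Multiset (Finset (Fin n))).map fun Q => Q \ C0).filter fun Q => Q ≠ ∅)
      = {D, D}
    rw [show (({D, D} : Multiset (Finset (Fin n))).map fun Q => Q \ C0) = {D, D} by
      simp [hDC]]
    apply Multiset.filter_eq_self.2
    intro T hT
    rcases Multiset.mem_cons.1 hT with h | h
    · subst h; exact hD
    · rw [Multiset.mem_singleton.1 h]; exact hD
  have hsub : D ⊆ repSet (pur (⟨C0, {D, D}⟩ : CMI n)) := by
    intro x hx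
    rw [mem_repSet, hQs]
    rw [Multiset.filter_eq_self.2]
    · simp
    · intro T hT
      rcases Multiset.mem_cons.1 hT with h | h
      · subst h; exact hx
      · rw [Multiset.mem_singleton.1 h]; exact hx
  have hparts : parts (pur (⟨C0, {D, D}⟩ : CMI n)) = 0 := by
    unfold parts
    rw [hQs]
    apply Multiset.filter_eq_nil.2
    intro P hP
    obtain ⟨Q, hQ, rfl⟩ := Multiset.mem_map.1 hP
    have hQD : Q = D := by
      rcases Multiset.mem_cons.1 hQ with h | h
      · exact h
      · exact Multiset.mem_singleton.1 h
    subst hQD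
    exact not_not_intro (Finset.sdiff_eq_empty_iff_subset.2 hsub)
  obtain ⟨x, hx⟩ := Finset.nonempty_iff_ne_empty.2 hD
  unfold canParts
  rw [if_neg (by rw [hQs]; simp), if_pos ⟨Finset.ne_empty_of_mem (hsub hx),
    by rw [hparts]; simp⟩]

/-- `can(pur(K''))` when `K'' = (C₀, Ts)` with pairwise position-disjoint nonempty parts. -/
theorem canParts_of_list {C0 : Finset (Fin n)} {M : Multiset (Finset (Fin n))}
    (hM2 : 2 ≤ Multiset.card M) (hne : ∀ T ∈ M, T ≠ ∅) (hdisj : ∀ T ∈ M, T \ C0 = T)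
    (hcnt : ∀ x : Fin n, Multiset.card (M.filter fun T => x ∈ T) ≤ 1) :
    canParts (pur (⟨C0, M⟩ : CMI n)) = M := by
  have hQs : (pur (⟨C0, M⟩ : CMI n)).Qs = M := by
    show ((M.map fun Q => Q \ C0).filter fun Q => Q ≠ ∅) = M
    rw [show (M.map fun Q => Q \ C0) = M from
      (Multiset.map_congr rfl hdisj).trans (Multiset.map_id' M)]
    exact Multiset.filter_eq_self.2 hne
  have hrep : repSet (pur (⟨C0, M⟩ : CMI n)) = ∅ := by
    rw [Finset.eq_empty_iff_forall_notMem]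
    intro x hx
    rw [mem_repSet, hQs] at hx
    have := hcnt x
    omega
  have hparts : parts (pur (⟨C0, M⟩ : CMI n)) = M := by
    unfold parts
    rw [hQs, hrep]
    rw [show (M.map fun Q => Q \ (∅ : Finset (Fin n))) = M from
      (Multiset.map_congr rfl (fun T _ => Finset.sdiff_empty)).trans (Multiset.map_id' M)]
    exact Multiset.filter_eq_self.2 hne
  unfold canParts
  rw [if_neg (by rw [hQs]; omega), if_neg (by rw [hrep]; rintro ⟨h, -⟩; exact h rfl)]
  exact hparts

/-- `can(pur(K''))` when `K'' = (C₀, D ::ₘ D ::ₘ Ts)`. -/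
theorem canParts_of_cons {C0 D : Finset (Fin n)} {M : Multiset (Finset (Fin n))}
    (hD : D ≠ ∅) (hDC : D \ C0 = D) (hM2 : 2 ≤ Multiset.card M)
    (hne : ∀ T ∈ M, T ≠ ∅) (hdisj : ∀ T ∈ M, T \ C0 = T)
    (hDT : ∀ T ∈ M, T \ D = T)
    (hcnt : ∀ x : Fin n, Multiset.card (M.filter fun T => x ∈ T) ≤ 1) :
    canParts (pur (⟨C0, D ::ₘ D ::ₘ M⟩ : CMI n)) = M := by
  have hQs : (pur (⟨C0, D ::ₘ D ::ₘ M⟩ : CMI n)).Qs = D ::ₘ D ::ₘ M := by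
    show (((D ::ₘ D ::ₘ M).map fun Q => Q \ C0).filter fun Q => Q ≠ ∅) = D ::ₘ D ::ₘ M
    rw [Multiset.map_cons, Multiset.map_cons, hDC,
      show (M.map fun Q => Q \ C0) = M from
        (Multiset.map_congr rfl hdisj).trans (Multiset.map_id' M)]
    apply Multiset.filter_eq_self.2
    intro T hT
    rcases Multiset.mem_cons.1 hT with h | h
    · subst h; exact hD
    · rcases Multiset.mem_cons.1 h with h' | h'
      · subst h'; exact hD
      · exact hne T h'
  have hrep : repSet (pur (⟨C0, D ::ₘ D ::ₘ M⟩ : CMI n)) = D := by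
    ext x
    rw [mem_repSet, hQs, Multiset.filter_cons, Multiset.filter_cons]
    by_cases hx : x ∈ D
    · rw [if_pos hx]
      simp only [Multiset.card_add, Multiset.card_singleton]
      exact iff_of_true (by omega) hx
    · rw [if_neg hx]
      simp only [Multiset.card_add, Multiset.card_zero]
      have := hcnt x
      exact iff_of_false (by omega) hx
  have hparts : parts (pur (⟨C0, D ::ₘ D ::ₘ M⟩ : CMI n)) = M := by
    unfold parts
    rw [hQs, hrep, Multiset.map_cons, Multiset.map_cons, Finset.sdiff_self,
      show (M.map fun Q => Q \ D) = M from
        (Multiset.map_congr rfl hDT).trans (Multiset.map_id' M),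
      Multiset.filter_cons_of_neg (p := fun P : Finset (Fin n) => P ≠ ∅) _ (not_not_intro rfl),
      Multiset.filter_cons_of_neg (p := fun P : Finset (Fin n) => P ≠ ∅) _ (not_not_intro rfl)]
    exact Multiset.filter_eq_self.2 hne
  unfold canParts
  rw [if_neg (by rw [hQs]; simp only [Multiset.card_cons]; omega),
    if_neg (by rw [hparts]; rintro ⟨-, hle⟩; omega)]
  exact hparts

end Branches

theorem stmt15' {n : ℕ} (K K' : CMI n) (himp : Implies K K') :
    (canParts (pur (RCond K K'))).sup ⊆ (canParts (pur K)).sup := by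
  intro q hq
  have hRC : RCond K K' =
      (if repSet (pur K') \ repSet (pur K) = ∅ ∧
          Multiset.card (((canParts (pur K')).map fun P => P \ repSet (pur K)).filter
            fun T => T ≠ ∅) ≤ 1 then (⟨∅, 0⟩ : CMI n)
      else if repSet (pur K') \ repSet (pur K) = ∅ then
        ⟨K'.C \ repSet (pur K), ((canParts (pur K')).map fun P => P \ repSet (pur K)).filter
            fun T => T ≠ ∅⟩
      else if Multiset.card (((canParts (pur K')).map fun P => P \ repSet (pur K)).filter
            fun T => T ≠ ∅) ≤ 1 then
        ⟨K'.C \ repSet (pur K), {repSet (pur K') \ repSet (pur K),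
          repSet (pur K') \ repSet (pur K)}⟩
      else ⟨K'.C \ repSet (pur K), (repSet (pur K') \ repSet (pur K)) ::ₘ
          (repSet (pur K') \ repSet (pur K)) ::ₘ
          ((canParts (pur K')).map fun P => P \ repSet (pur K)).filter fun T => T ≠ ∅⟩) := rfl
  -- facts about entries of Ts
  have Ts_src : ∀ T ∈ ((canParts (pur K')).map fun P => P \ repSet (pur K)).filter
      (fun T => T ≠ ∅), ∃ E ∈ (pur K').Qs, (E \ repSet (pur K')) \ repSet (pur K) = T := by
    intro T hT
    obtain ⟨hT1, hT2⟩ := Multiset.mem_filter.1 hT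
    obtain ⟨P, hP, rfl⟩ := Multiset.mem_map.1 hT1
    have hP' : P ∈ parts (pur K') := Multiset.mem_of_le (canParts_le_parts _) hP
    obtain ⟨-, E, hE, rfl⟩ := mem_parts hP'
    exact ⟨E, hE, rfl⟩
  have Ts_ne : ∀ T ∈ ((canParts (pur K')).map fun P => P \ repSet (pur K)).filter
      (fun T => T ≠ ∅), T ≠ ∅ := fun T hT => (Multiset.mem_filter.1 hT).2
  have Ts_sub : ∀ T ∈ ((canParts (pur K')).map fun P => P \ repSet (pur K)).filter
      (fun T => T ≠ ∅), ∀ x ∈ T, x ∉ K'.C ∧ x ∉ repSet (pur K') ∧ x ∉ repSet (pur K) := by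
    intro T hT x hx
    obtain ⟨E, hE, rfl⟩ := Ts_src T hT
    have hx1 := Finset.mem_sdiff.1 hx
    have hx2 := Finset.mem_sdiff.1 hx1.1
    exact ⟨notMem_C_of_mem_pur hE hx2.1, hx2.2, hx1.2⟩
  have Ts_disjC : ∀ T ∈ ((canParts (pur K')).map fun P => P \ repSet (pur K)).filter
      (fun T => T ≠ ∅), T \ (K'.C \ repSet (pur K)) = T := by
    intro T hT
    rw [Finset.sdiff_eq_self_iff_disjoint, Finset.disjoint_left]
    intro x hx hx2
    exact (Ts_sub T hT x hx).1 (Finset.mem_sdiff.1 hx2).1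
  have Ts_disjD : ∀ T ∈ ((canParts (pur K')).map fun P => P \ repSet (pur K)).filter
      (fun T => T ≠ ∅), T \ (repSet (pur K') \ repSet (pur K)) = T := by
    intro T hT
    rw [Finset.sdiff_eq_self_iff_disjoint, Finset.disjoint_left]
    intro x hx hx2
    exact (Ts_sub T hT x hx).2.1 (Finset.mem_sdiff.1 hx2).1
  have hDC : (repSet (pur K') \ repSet (pur K)) \ (K'.C \ repSet (pur K))
      = repSet (pur K') \ repSet (pur K) := by
    rw [Finset.sdiff_eq_self_iff_disjoint, Finset.disjoint_left]
    intro x hx hx2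
    exact repSet_pur_notMem_C (Finset.mem_sdiff.1 hx).1 (Finset.mem_sdiff.1 hx2).1
  -- counting in Ts
  have canParts_cases : canParts (pur K') = 0 ∨ canParts (pur K') = parts (pur K') := by
    unfold canParts
    split_ifs <;> simp
  have hTs_cases : (((canParts (pur K')).map fun P => P \ repSet (pur K)).filter
        fun T => T ≠ ∅) = 0 ∨
      (((canParts (pur K')).map fun P => P \ repSet (pur K)).filter fun T => T ≠ ∅)
        = Multiset.map (fun E => (E \ repSet (pur K')) \ repSet (pur K))
          (((pur K').Qs).filter
            fun E => ¬ (E \ repSet (pur K')) \ repSet (pur K) = ∅) := by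
    rcases canParts_cases with hcp | hcp
    · left; rw [hcp]; simp
    · right
      rw [hcp]
      unfold parts
      rw [Multiset.filter_map, Multiset.filter_filter, Multiset.filter_map, Multiset.map_map]
      congr 1
      apply Multiset.filter_congr
      intro E _
      constructor
      · rintro ⟨h1, -⟩; exact h1
      · intro h1
        exact ⟨h1, fun he => h1 (by
          rw [show E \ repSet (pur K') = ∅ from he, Finset.empty_sdiff])⟩
  have cnt_Ts : ∀ x : Fin n, Multiset.card
      ((((canParts (pur K')).map fun P => P \ repSet (pur K)).filter
        (fun T => T ≠ ∅)).filter fun T => x ∈ T) ≤ 1 := by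
    intro x
    rcases hTs_cases with hT | hT
    · rw [hT]; simp
    · rw [hT, Multiset.filter_map, Multiset.card_map, Multiset.filter_filter]
      by_cases hx : x ∈ repSet (pur K')
      · rw [show Multiset.filter _ ((pur K').Qs) = 0 from Multiset.filter_eq_nil.2 ?_]
        · simp
        · rintro E - ⟨hxE, -⟩
          exact (Finset.mem_sdiff.1 (Finset.mem_sdiff.1 hxE).1).2 hx
      · calc Multiset.card (Multiset.filter _ ((pur K').Qs))
            ≤ Multiset.card (((pur K').Qs).filter fun E => x ∈ E) := by
              apply Multiset.card_le_card
              apply Multiset.monotone_filter_right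
              rintro E ⟨hxE, -⟩
              exact (Finset.mem_sdiff.1 (Finset.mem_sdiff.1 hxE).1).1
          _ ≤ 1 := by
              by_contra h
              exact hx (mem_repSet.2 (by omega))
  have card_Ts_le : Multiset.card (((canParts (pur K')).map fun P => P \ repSet (pur K)).filter
        (fun T => T ≠ ∅))
      ≤ Multiset.card (((pur K').Qs).filter
        fun E => ¬ (E \ repSet (pur K')) \ repSet (pur K) = ∅) := by
    rcases hTs_cases with hT | hT
    · rw [hT]; simp
    · rw [hT, Multiset.card_map]
  -- branch analysis
  by_cases hD : repSet (pur K') \ repSet (pur K) = ∅ <;>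
    by_cases hT1 : Multiset.card (((canParts (pur K')).map fun P => P \ repSet (pur K)).filter
      fun T => T ≠ ∅) ≤ 1
  · -- degenerate branch
    rw [hRC, if_pos ⟨hD, hT1⟩] at hq
    have hcp : canParts (pur (⟨∅, 0⟩ : CMI n)) = 0 := by
      have hp : (pur (⟨∅, 0⟩ : CMI n)).Qs = 0 := by
        show ((Multiset.map _ 0).filter fun Q => Q ≠ ∅) = 0
        simp
      unfold canParts
      rw [if_pos (by rw [hp]; simp)]
    rw [hcp] at hq
    simp at hq
  · -- K'' = (C'', Ts)
    rw [hRC, if_neg (fun h => hT1 h.2), if_pos hD] at hq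
    rw [canParts_of_list (by omega) Ts_ne Ts_disjC cnt_Ts] at hq
    obtain ⟨T, hT, hqT⟩ := mem_msup.1 hq
    obtain ⟨E1, hE1, hTeq⟩ := Ts_src T hT
    exact main_step K K' himp q (by
      have h2 : 2 ≤ Multiset.card (((canParts (pur K')).map fun P => P \ repSet (pur K)).filter
        fun T => T ≠ ∅) := by omega
      omega) E1 hE1 (hTeq ▸ hqT)
  · -- K'' = (C'', {D, D})
    rw [hRC, if_neg (fun h => hD h.1), if_neg hD, if_pos hT1] at hq
    rw [canParts_of_double (fun h => hD h) hDC] at hq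
    simp at hq
  · -- K'' = (C'', D ::ₘ D ::ₘ Ts)
    rw [hRC, if_neg (fun h => hD h.1), if_neg hD, if_neg hT1] at hq
    rw [canParts_of_cons (fun h => hD h) hDC (by omega) Ts_ne Ts_disjC Ts_disjD cnt_Ts] at hq
    obtain ⟨T, hT, hqT⟩ := mem_msup.1 hq
    obtain ⟨E1, hE1, hTeq⟩ := Ts_src T hT
    exact main_step K K' himp q (by omega) E1 hE1 (hTeq ▸ hqT)

/-- if `K` implies `K'` and `R_K^{K'} ≠ (·,⟨⟩)`, then `P'' ⊆ P`. -/
theorem stmt15 {n : ℕ} (K K' : CMI n)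
    (hdK : ¬ Degenerate K) (hdK' : ¬ Degenerate K')
    (himp : Implies K K') (hR : ¬ Degenerate (RCond K K')) :
    (canParts (pur (RCond K K'))).sup ⊆ (canParts (pur K)).sup := by
  exact stmt15' K K' himp

end Paper
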